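/- Let E be a locally convex Hausdorff real topological vector space, let F be a real Banach lattice, and let r, s ∈ ℝ with s ≠ −r; define Φ : F → F by Φ(f) = r•f⁺ + s•f⁻. Then the linear span of { Φ ∘ g : g ∈ Aff(E, F) } is dense in C(E, F) with the compact-open topology. In particular, the linear sublattice of C(E, F) generated by Aff(E, F) is dense in C(E, F). -/

import Mathlib

/-!
Since `Φ f + Φ (-f) = (r + s) • |f|`, the span contains `x ↦ |ℓ x - a| • c` for every continuous
functional `ℓ`, `a ∈ ℝ` and `c ≥ 0`. On a compact `K ⊆ E`, the real functions `φ` such that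
`φ • c` lies in the closure of the restricted span form a closed subspace containing `1` and all
`|ℓ - a|`. Piecewise linear interpolation on the line shows that it then contains `η ∘ ℓ` for
every continuous `η`, in particular `exp ∘ ℓ`; these functions are closed under products and
separate points by Hahn–Banach, so by Stone–Weierstrass the subspace is everything. Finally a
partition of unity approximates `f ∈ C(K, F)` by `∑ ρᵢ • f(xᵢ)`.
-/

open Set Submodule

namespace ContinuousMap

variable {X : Type*} [TopologicalSpace X]

theorem dense_of_forall_isCompact_exists_dist_lt {Y : Type*} [PseudoMetricSpace Y]
    {S : Set C(X, Y)}
    (h : ∀ K, IsCompact K → ∀ f : C(X, Y), ∀ ε > 0, ∃ g ∈ S, ∀ x ∈ K, dist (f x) (g x) < ε) :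
    Dense S := by
  refine fun f => (mem_closure_iff_nhds_basis
    (nhds_basis_uniformity' hasBasis_compactConvergenceUniformity)).2 ?_
  rintro ⟨K, V⟩ ⟨hK, hV⟩
  obtain ⟨ε, hε, hεV⟩ := Metric.mem_uniformity_dist.mp hV
  obtain ⟨g, hgS, hg⟩ := h K hK f ε hε
  exact ⟨g, hgS, fun x hx => hεV (hg x hx)⟩

variable (R : Type*) {M : Type*} [Semiring R] [TopologicalSpace M] [AddCommMonoid M]
  [Module R M] [ContinuousAdd M] [ContinuousConstSMul R M]

def restrictₗ (s : Set X) : C(X, M) →ₗ[R] C(s, M) where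
  toFun f := f.restrict s
  map_add' _ _ := rfl
  map_smul' _ _ := rfl

variable {R}

@[simp]
theorem restrictₗ_apply (s : Set X) (f : C(X, M)) : restrictₗ R s f = f.restrict s := rfl

theorem submodule_eq_top_of_smul_const_mem [CompactSpace X] [T2Space X] {F : Type*}
    [NormedAddCommGroup F] [NormedSpace ℝ F] (W : Submodule ℝ C(X, F))
    (hW : IsClosed (W : Set C(X, F))) (h : ∀ (φ : C(X, ℝ)) (c : F), φ • const X c ∈ W) :
    W = ⊤ := by
  refine eq_top_iff.2 fun f _ => hW.closure_subset (Metric.mem_closure_iff.2 fun ε hε => ?_)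
  let U : X → Set X := fun x => {y | dist (f y) (f x) < ε}
  have hU : ∀ x, IsOpen (U x) := fun x => isOpen_lt (by fun_prop) continuous_const
  obtain ⟨t, ht⟩ := CompactSpace.elim_nhds_subcover U fun x => (hU x).mem_nhds (by simpa [U])
  obtain ⟨ρ, hρ⟩ := PartitionOfUnity.exists_isSubordinate (ι := t) isClosed_univ
    (fun i => U i) (fun i => hU i) fun y _ => by
      obtain ⟨i, hi, hy⟩ := mem_iUnion₂.1 (ht.ge (mem_univ y))
      exact mem_iUnion.2 ⟨⟨i, hi⟩, hy⟩
  refine ⟨∑ i, ρ i • const X (f i), W.sum_mem fun i _ => h _ _, (dist_lt_iff hε).2 fun y => ?_⟩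
  have hy : ∑ᶠ i, ρ i y • f i ∈ Metric.ball (f y) ε := by
    refine ρ.finsum_smul_mem_convex (g := fun i _ => f i) (mem_univ y) (fun i hi => ?_)
      (convex_ball _ _)
    exact Metric.mem_ball_comm.1 (hρ i (subset_tsupport _ hi))
  simpa [finsum_eq_sum_of_fintype, dist_comm] using hy

theorem submodule_eq_top_of_separatesPoints [CompactSpace X] (A : Submodule ℝ C(X, ℝ))
    (hA : IsClosed (A : Set C(X, ℝ))) (S : Submonoid C(X, ℝ)) (hSA : ∀ g ∈ S, g ∈ A)
    (hS : ∀ x y, x ≠ y → ∃ g ∈ S, g x ≠ g y) : A = ⊤ := by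
  let B := Algebra.adjoin ℝ (S : Set C(X, ℝ))
  have hBA : (B : Set C(X, ℝ)) ⊆ A := by
    rw [← Subalgebra.coe_toSubmodule, Algebra.adjoin_eq_span, Submonoid.closure_eq]
    exact span_le.2 hSA
  have hB : B.SeparatesPoints := fun x y hxy =>
    let ⟨g, hg, hgxy⟩ := hS x y hxy
    ⟨g, ⟨g, Algebra.subset_adjoin hg, rfl⟩, hgxy⟩
  refine eq_top_iff.2 fun f _ => hA.closure_subset_iff.2 hBA ?_
  rw [← Subalgebra.topologicalClosure_coe,
    subalgebra_topologicalClosure_eq_top_of_separatesPoints B hB]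
  trivial

end ContinuousMap

noncomputable def absSub (a : ℝ) : C(ℝ, ℝ) := ⟨fun u => |u - a|, by fun_prop⟩

noncomputable def ramp (b h : ℝ) : C(ℝ, ℝ) :=
  ⟨fun u => (|u - b| - |u - (b + h)| + h) / (2 * h), by fun_prop⟩

section ramp

variable {b h u : ℝ}

theorem ramp_mem_span (b h : ℝ) : ramp b h ∈ span ℝ (insert 1 (range absSub)) := by
  have : ramp b h = (2 * h)⁻¹ • (absSub b - absSub (b + h) + h • 1) := by
    ext u; simp [ramp, absSub, div_eq_inv_mul]; ring
  rw [this]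
  refine smul_mem _ _ (add_mem (sub_mem ?_ ?_) (smul_mem _ _ (subset_span (mem_insert _ _)))) <;>
    exact subset_span (mem_insert_of_mem _ (mem_range_self _))

theorem ramp_of_le (hh : 0 < h) (hu : u ≤ b) : ramp b h u = 0 := by
  simp only [ramp, ContinuousMap.coe_mk]
  rw [abs_of_nonpos (by linarith), abs_of_nonpos (by linarith)]
  ring

theorem ramp_of_ge (hh : 0 < h) (hu : b + h ≤ u) : ramp b h u = 1 := by
  simp only [ramp, ContinuousMap.coe_mk]
  rw [abs_of_nonneg (by linarith), abs_of_nonneg (by linarith)]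
  field_simp
  ring

theorem ramp_mem_Icc (hh : 0 < h) (u : ℝ) : ramp b h u ∈ Icc 0 1 := by
  have := abs_le.1 ((abs_abs_sub_abs_le_abs_sub (u - b) (u - (b + h))).trans_eq
    (by rw [sub_sub_sub_cancel_left, add_sub_cancel_left, abs_of_pos hh]))
  simp only [ramp, ContinuousMap.coe_mk, mem_Icc]
  constructor
  · apply div_nonneg <;> linarith
  · rw [div_le_one (by positivity)]; linarith

end ramp

theorem exists_interpolant_step (η : ℝ → ℝ) {a b h ε : ℝ} (hh : 0 < h) {q : C(ℝ, ℝ)}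
    (hq : q ∈ span ℝ (insert 1 (range absSub))) (hq_right : ∀ u, b ≤ u → q u = η b)
    (hq_near : ∀ u ∈ Icc a b, |η u - q u| < ε) (hη : ∀ u ∈ Icc b (b + h), |η u - η b| < ε / 2) :
    ∃ q' ∈ span ℝ (insert 1 (range absSub)),
      (∀ u, b + h ≤ u → q' u = η (b + h)) ∧ ∀ u ∈ Icc a (b + h), |η u - q' u| < ε := by
  have hb : b ≤ b + h := by linarith
  refine ⟨q + (η (b + h) - η b) • ramp b h, add_mem hq (smul_mem _ _ (ramp_mem_span b h)),
    fun u hu => ?_, fun u hu => ?_⟩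
  · simp [hq_right u (hb.trans hu), ramp_of_ge hh hu]
  rcases le_total u b with hub | hbu
  · simpa [ramp_of_le hh hub] using hq_near u ⟨hu.1, hub⟩
  obtain ⟨hr0, hr1⟩ := ramp_mem_Icc (b := b) hh u
  have hend := hη (b + h) ⟨hb, le_rfl⟩
  calc |η u - (q + (η (b + h) - η b) • ramp b h) u|
      = |(η u - η b) - (η (b + h) - η b) * ramp b h u| := by simp [hq_right u hbu]; ring_nf
    _ ≤ |η u - η b| + |η (b + h) - η b| * ramp b h u :=
        (abs_sub _ _).trans_eq (by rw [abs_mul, abs_of_nonneg hr0])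
    _ < ε / 2 + ε / 2 * 1 := add_lt_add_of_lt_of_le (hη u ⟨hbu, hu.2⟩)
        (mul_le_mul hend.le hr1 hr0 ((abs_nonneg _).trans hend.le))
    _ = ε := by ring

theorem exists_interpolant (η : ℝ → ℝ) {a h ε : ℝ} (hh : 0 < h) (hε : 0 < ε) (n : ℕ)
    (hη : ∀ k < n, ∀ u ∈ Icc (a + k * h) (a + k * h + h), |η u - η (a + k * h)| < ε / 2) :
    ∃ q ∈ span ℝ (insert 1 (range absSub)),
      (∀ u, a + n * h ≤ u → q u = η (a + n * h)) ∧ ∀ u ∈ Icc a (a + n * h), |η u - q u| < ε := by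
  induction n with
  | zero =>
    refine ⟨η a • 1, smul_mem _ _ (subset_span (mem_insert _ _)), by simp, fun u hu => ?_⟩
    simp [le_antisymm hu.2 (by simpa using hu.1), hε]
  | succ n ih =>
    obtain ⟨q, hq, hq_right, hq_near⟩ := ih fun k hk => hη k (by omega)
    push_cast
    rw [add_one_mul, ← add_assoc]
    exact exists_interpolant_step η hh hq hq_right hq_near (hη n n.lt_succ_self)

theorem exists_mem_span_abs_sub_near (η : C(ℝ, ℝ)) {a b ε : ℝ} (hab : a ≤ b) (hε : 0 < ε) :
    ∃ q ∈ span ℝ (insert 1 (range absSub)), ∀ u ∈ Icc a b, |η u - q u| < ε := by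
  obtain ⟨δ, hδ, hηδ⟩ := Metric.uniformContinuousOn_iff.1
    ((isCompact_Icc (a := a) (b := b + 1)).uniformContinuousOn_of_continuous
      η.continuous.continuousOn) (ε / 2) (half_pos hε)
  set h := min (δ / 2) 1
  have hh : 0 < h := by positivity
  have hhδ : h < δ := (min_le_left _ _).trans_lt (half_lt_self hδ)
  set N := ⌈(b - a) / h⌉₊
  have hN : b ≤ a + N * h ∧ a + N * h ≤ b + 1 := by
    have h1 := (div_le_iff₀ hh).1 (Nat.le_ceil ((b - a) / h))
    have h2 := (lt_div_iff₀ hh).1 (sub_lt_iff_lt_add.2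
      (Nat.ceil_lt_add_one (div_nonneg (sub_nonneg.2 hab) hh.le)))
    have : h ≤ 1 := min_le_right _ _
    constructor <;> nlinarith
  obtain ⟨q, hq, -, hq_near⟩ := exists_interpolant η hh hε N fun k hk u hu => by
    have hk0 : a ≤ a + k * h := le_add_of_nonneg_right (by positivity)
    have hkN : a + k * h + h ≤ a + N * h := by
      have : (k + 1 : ℝ) ≤ N := by exact_mod_cast hk
      nlinarith
    have := hηδ u ⟨hk0.trans hu.1, by linarith [hu.2]⟩ (a + k * h) ⟨hk0, by linarith⟩
      (by rw [Real.dist_eq, abs_of_nonneg (by linarith [hu.1])]; linarith [hu.2])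
    rwa [Real.dist_eq] at this
  exact ⟨q, hq, fun u hu => hq_near u ⟨hu.1, hu.2.trans hN.1⟩⟩

theorem dense_span_abs_sub : Dense (span ℝ (insert 1 (range absSub)) : Set C(ℝ, ℝ)) := by
  refine ContinuousMap.dense_of_forall_isCompact_exists_dist_lt fun K hK η ε hε => ?_
  obtain ⟨R, hR, hKR⟩ := hK.isBounded.subset_closedBall_lt 0 0
  rw [Real.closedBall_eq_Icc, zero_sub, zero_add] at hKR
  obtain ⟨q, hq, hq_near⟩ := exists_mem_span_abs_sub_near η (neg_le_self hR.le) hε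
  exact ⟨q, hq, fun u hu => by simpa [Real.dist_eq] using hq_near u (hKR hu)⟩

theorem ContinuousMap.comp_mem_of_forall_abs_sub_comp_mem {X : Type*} [TopologicalSpace X]
    (A : Submodule ℝ C(X, ℝ)) (hA : IsClosed (A : Set C(X, ℝ))) {g : C(X, ℝ)} (h1 : 1 ∈ A)
    (habs : ∀ a, (absSub a).comp g ∈ A) (η : C(ℝ, ℝ)) : η.comp g ∈ A := by
  let A' := A.comap (ContinuousMap.compRightAlgHom ℝ ℝ g).toLinearMap
  have hA' : IsClosed (A' : Set C(ℝ, ℝ)) := hA.preimage (ContinuousMap.continuous_precomp g)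
  have hGA' : span ℝ (insert 1 (range absSub)) ≤ A' := by
    refine span_le.2 (insert_subset ?_ (range_subset_iff.2 habs))
    simpa [A'] using h1
  exact hA'.closure_subset_iff.2 hGA' (dense_span_abs_sub η)

section BanachLattice

variable {F : Type*} [Lattice F] [AddCommGroup F] [IsOrderedAddMonoid F] [Module ℝ F]

theorem abs_smul_of_nonneg [PosSMulMono ℝ F] {c : F} (hc : 0 ≤ c) (u : ℝ) :
    |u • c| = |u| • c := by
  rcases le_total 0 u with hu | hu
  · rw [abs_of_nonneg (smul_nonneg hu hc), abs_of_nonneg hu]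
  · rw [abs_of_nonpos (smul_nonpos_of_nonpos_of_nonneg hu hc), abs_of_nonpos hu, neg_smul]

theorem add_apply_neg_eq_smul_abs {r s : ℝ} {Φ : F → F}
    (hΦ : ∀ f : F, Φ f = r • (f ⊔ 0) + s • ((-f) ⊔ 0)) (f : F) :
    Φ f + Φ (-f) = (r + s) • |f| := by
  rw [hΦ, hΦ, neg_neg, ← posPart_add_negPart f, posPart_def, negPart_def]
  module

end BanachLattice

section AffineComp

variable {E : Type*} [AddCommGroup E] [Module ℝ E] [TopologicalSpace E]
  {F : Type*} [NormedAddCommGroup F] [Lattice F] [IsOrderedAddMonoid F] [HasSolidNorm F]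
  [NormedSpace ℝ F] {r s : ℝ} {Φ : F → F}

variable (E) in
def affineCompSpan (Φ : F → F) : Submodule ℝ C(E, F) :=
  span ℝ {h : C(E, F) | ∃ (T : E →L[ℝ] F) (b : F), ∀ x : E, h x = Φ (T x + b)}

variable [PosSMulMono ℝ F] (hrs : s ≠ -r) (hΦ : ∀ f : F, Φ f = r • (f ⊔ 0) + s • ((-f) ⊔ 0))
include hrs hΦ

theorem abs_sub_smul_mem_affineCompSpan (ℓ : E →L[ℝ] ℝ) (a : ℝ) {c : F} (hc : 0 ≤ c) :
    (⟨fun x => |ℓ x - a| • c, by fun_prop⟩ : C(E, F)) ∈ affineCompSpan E Φ := by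
  have hΦc : Continuous Φ := by rw [funext hΦ]; fun_prop
  let T := ℓ.smulRight c
  let g : C(E, F) := ⟨fun x => Φ (T x + -(a • c)), by fun_prop⟩
  let g' : C(E, F) := ⟨fun x => Φ ((-T) x + a • c), by fun_prop⟩
  have hsum : (⟨fun x => |ℓ x - a| • c, by fun_prop⟩ : C(E, F)) = (r + s)⁻¹ • (g + g') := by
    ext x
    have hx : (-T) x + a • c = -(T x + -(a • c)) := by simp; abel
    simp only [ContinuousMap.coe_mk, ContinuousMap.smul_apply, ContinuousMap.add_apply, g, g', hx,
      add_apply_neg_eq_smul_abs hΦ, smul_smul]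
    rw [inv_mul_cancel₀ (by contrapose! hrs; linarith), one_smul, ← abs_smul_of_nonneg hc]
    rw [sub_smul, sub_eq_add_neg]; rfl
  rw [hsum]
  exact smul_mem _ _
    (add_mem (subset_span ⟨T, _, fun _ => rfl⟩) (subset_span ⟨-T, _, fun _ => rfl⟩))

end AffineComp

section Compact

variable {E : Type*} [AddCommGroup E] [Module ℝ E] [TopologicalSpace E]
  [IsTopologicalAddGroup E] [ContinuousSMul ℝ E] [LocallyConvexSpace ℝ E] [T2Space E]

variable (E) in
def expDualRestrict (K : Set E) : Submonoid C(K, ℝ) where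
  carrier := range fun ℓ : E →L[ℝ] ℝ =>
    (⟨Real.exp, Real.continuous_exp⟩ : C(ℝ, ℝ)).comp ((ℓ : C(E, ℝ)).restrict K)
  mul_mem' := by
    rintro _ _ ⟨ℓ₁, rfl⟩ ⟨ℓ₂, rfl⟩
    exact ⟨ℓ₁ + ℓ₂, by ext; simp [Real.exp_add]⟩
  one_mem' := ⟨0, by ext; simp⟩

theorem expDualRestrict_separatesPoints (K : Set E) {x y : K} (hxy : x ≠ y) :
    ∃ g ∈ expDualRestrict E K, g x ≠ g y := by
  obtain ⟨ℓ, hℓ⟩ := SeparatingDual.exists_separating_of_ne (R := ℝ) (Subtype.coe_ne_coe.2 hxy)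
  exact ⟨_, ⟨ℓ, rfl⟩, fun h => hℓ (Real.exp_injective h)⟩

variable {F : Type*} [NormedAddCommGroup F] [Lattice F] [IsOrderedAddMonoid F] [HasSolidNorm F]
  [NormedSpace ℝ F] [PosSMulMono ℝ F] {r s : ℝ} {Φ : F → F}
  (hrs : s ≠ -r) (hΦ : ∀ f : F, Φ f = r • (f ⊔ 0) + s • ((-f) ⊔ 0))
include hrs hΦ

theorem smul_const_mem_closure_map_restrictₗ (K : Set E) [CompactSpace K]
    (φ : C(K, ℝ)) (c : F) :
    φ • ContinuousMap.const K c ∈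
      ((affineCompSpan E Φ).map (ContinuousMap.restrictₗ ℝ K)).topologicalClosure := by
  set V := (affineCompSpan E Φ).map (ContinuousMap.restrictₗ ℝ K)
  suffices h : ∀ c : F, 0 ≤ c → ∀ φ : C(K, ℝ),
      φ • ContinuousMap.const K c ∈ V.topologicalClosure by
    have : φ • ContinuousMap.const K c =
        φ • ContinuousMap.const K c⁺ - φ • ContinuousMap.const K c⁻ := by
      ext; simp [← smul_sub, posPart_sub_negPart]
    rw [this]
    exact sub_mem (h _ (posPart_nonneg c) φ) (h _ (negPart_nonneg c) φ)
  intro c hc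
  let Θ := (ContinuousLinearMap.toSpanSingleton ℝ c).compLeftContinuous ℝ K
  have hΘ : ∀ φ : C(K, ℝ), Θ φ = φ • ContinuousMap.const K c := fun φ => by ext; simp [Θ]
  let A := V.topologicalClosure.comap (Θ : C(K, ℝ) →ₗ[ℝ] C(K, F))
  have hA : IsClosed (A : Set C(K, ℝ)) := V.isClosed_topologicalClosure.preimage Θ.continuous
  have habs : ∀ (ℓ : E →L[ℝ] ℝ) (a : ℝ), (absSub a).comp ((ℓ : C(E, ℝ)).restrict K) ∈ A := by
    intro ℓ a
    refine V.le_topologicalClosure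
      (mem_map.2 ⟨_, abs_sub_smul_mem_affineCompSpan hrs hΦ ℓ a hc, ?_⟩)
    ext; simp [Θ, absSub]
  have h1 : 1 ∈ A := by
    convert habs 0 (-1)
    ext; simp [absSub]
  have hexp : ∀ g ∈ expDualRestrict E K, g ∈ A := by
    rintro _ ⟨ℓ, rfl⟩
    exact ContinuousMap.comp_mem_of_forall_abs_sub_comp_mem A hA h1 (habs ℓ) _
  have hAtop := ContinuousMap.submodule_eq_top_of_separatesPoints A hA _ hexp
    fun x y => expDualRestrict_separatesPoints K
  intro φ
  rw [← hΘ]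
  exact (hAtop ▸ mem_top : φ ∈ A)

theorem dense_affineCompSpan : Dense (affineCompSpan E Φ : Set C(E, F)) := by
  refine ContinuousMap.dense_of_forall_isCompact_exists_dist_lt fun K hK f ε hε => ?_
  have : CompactSpace K := isCompact_iff_compactSpace.mp hK
  have hW := ContinuousMap.submodule_eq_top_of_smul_const_mem _
    (Submodule.isClosed_topologicalClosure _)
    (smul_const_mem_closure_map_restrictₗ hrs hΦ K)
  have hf : f.restrict K ∈
      closure ((affineCompSpan E Φ).map (ContinuousMap.restrictₗ ℝ K) : Set C(K, F)) := by
    rw [← Submodule.topologicalClosure_coe, hW]; trivial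
  obtain ⟨_, ⟨g, hg, rfl⟩, hfg⟩ := Metric.mem_closure_iff.1 hf ε hε
  exact ⟨g, hg, fun x hx => (ContinuousMap.dist_apply_le_dist ⟨x, hx⟩).trans_lt hfg⟩

end Compact

theorem stmt_14_general (E : Type*) [AddCommGroup E] [Module ℝ E] [TopologicalSpace E]
    [IsTopologicalAddGroup E] [ContinuousSMul ℝ E] [LocallyConvexSpace ℝ E] [T2Space E]
    (F : Type*) [NormedAddCommGroup F] [Lattice F] [IsOrderedAddMonoid F] [HasSolidNorm F] [NormedSpace ℝ F]
    [PosSMulStrictMono ℝ F]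
    (r s : ℝ) (hrs : s ≠ -r)
    (Φ : F → F) (hΦ : ∀ f : F, Φ f = r • (f ⊔ 0) + s • ((-f) ⊔ 0)) :
    Dense (↑(Submodule.span ℝ
        {h : C(E, F) | ∃ (T : E →L[ℝ] F) (b : F), ∀ x : E, h x = Φ (T x + b)}) :
        Set C(E, F)) ∧
      Dense (⋂₀ {S : Set C(E, F) |
        {h : C(E, F) | ∃ (T : E →L[ℝ] F) (b : F), ∀ x : E, h x = T x + b} ⊆ S ∧
        (∀ x ∈ S, ∀ y ∈ S, x + y ∈ S) ∧ (∀ (c : ℝ), ∀ x ∈ S, c • x ∈ S) ∧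
        (∀ x ∈ S, ∀ y ∈ S, x ⊔ y ∈ S) ∧ (∀ x ∈ S, ∀ y ∈ S, x ⊓ y ∈ S)}) := by
  have hdense : Dense (affineCompSpan E Φ : Set C(E, F)) := dense_affineCompSpan hrs hΦ
  refine ⟨hdense, hdense.mono fun h hh => mem_sInter.2 ?_⟩
  rintro S ⟨hAff, hadd, hsmul, hsup, -⟩
  have h0 : (0 : C(E, F)) ∈ S := hAff ⟨0, 0, by simp⟩
  refine span_induction (fun g ⟨T, b, hg⟩ => ?_) h0 (fun x y _ _ hx hy => hadd x hx y hy)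
    (fun c x _ => hsmul c x) hh
  let ga : C(E, F) := ⟨fun x => T x + b, by fun_prop⟩
  have hga : ga ∈ S := hAff ⟨T, b, fun _ => rfl⟩
  have hg' : g = r • (ga ⊔ 0) + s • ((-1 : ℝ) • ga ⊔ 0) := by ext x; simp [hg, hΦ, ga]
  rw [hg']
  exact hadd _ (hsmul r _ (hsup _ hga _ h0)) _ (hsmul s _ (hsup _ (hsmul (-1) _ hga) _ h0))

/-- Let `E` be a locally convex Hausdorff real topological vector
space, `F` a real Banach lattice, and `Φ(f) = r•f⁺ + s•f⁻` with `s ≠ -r`. Then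
`span {Φ ∘ g : g ∈ Aff(E,F)}` is dense in `C(E,F)` with the compact-open topology; in
particular the sublattice of `C(E,F)` generated by `Aff(E,F)` is dense. -/
theorem stmt_14 (E : Type*) [AddCommGroup E] [Module ℝ E] [TopologicalSpace E]
    [IsTopologicalAddGroup E] [ContinuousSMul ℝ E] [LocallyConvexSpace ℝ E] [T2Space E]
    (F : Type*) [NormedAddCommGroup F] [Lattice F] [IsOrderedAddMonoid F] [HasSolidNorm F] [CompleteSpace F] [NormedSpace ℝ F]
    [PosSMulStrictMono ℝ F] [PosSMulReflectLT ℝ F]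
    (r s : ℝ) (hrs : s ≠ -r)
    (Φ : F → F) (hΦ : ∀ f : F, Φ f = r • (f ⊔ 0) + s • ((-f) ⊔ 0)) :
    Dense (↑(Submodule.span ℝ
        {h : C(E, F) | ∃ (T : E →L[ℝ] F) (b : F), ∀ x : E, h x = Φ (T x + b)}) :
        Set C(E, F)) ∧
      Dense (⋂₀ {S : Set C(E, F) |
        {h : C(E, F) | ∃ (T : E →L[ℝ] F) (b : F), ∀ x : E, h x = T x + b} ⊆ S ∧
        (∀ x ∈ S, ∀ y ∈ S, x + y ∈ S) ∧ (∀ (c : ℝ), ∀ x ∈ S, c • x ∈ S) ∧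
        (∀ x ∈ S, ∀ y ∈ S, x ⊔ y ∈ S) ∧ (∀ x ∈ S, ∀ y ∈ S, x ⊓ y ∈ S)}) :=
  stmt_14_general E F r s hrs Φ hΦ
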